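/- arXiv:2304.00491 — 13 statements merged into one kernel-verified Lean document; each statement's English description precedes it below -/
import Mathlib

section
/- Let F be a field and let α1, α2, α3, α4, β1, β2, β3, β4 ∈ F. The two-dimensional algebra on F × F with matrix of structure constants ((α1, α2, α3, α4), (β1, β2, β3, β4)) is endo-commutative (i.e. (x·x)·(y·y) = (x·y)·(x·y) for all x, y ∈ F × F) if and only if the following eight equations hold: (1) α1²α3 + α1α2β3 + α3²β1 + α4β1β3 = α1²α2 + α2²β1 + α1α3β2 + α4β1β2; (2) α1²α4 + α1α2β4 + α3α4β1 + α4β1β4 = α1α2² + α2²β2 + α2α3β2 + α4β2²; (3) α1α3α4 + α2α3β4 + α3α4β3 + α4β3β4 = α1α2α4 + α2α4β2 + α2α3β4 + α4β2β4; (4) α1²α4 + α2α4β1 + α1α3β4 + α4β1β4 = α1α3² + α2α3β3 + α3²β3 + α4β3²; (5) α1α3β1 + α1β2β3 + α3β1β3 + β1β3β4 = α1α2β1 + α2β1β2 + α1β2β3 + β1β2β4; (6) α1α4β1 + α1β2β4 + α4β1β3 + β1β4² = α2²β1 + α2β2² + α2β2β3 + β2²β4; (7) α3α4β1 + α3β2β4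 + α4β3² + β3β4² = α2α4β1 + α4β2² + α2β3β4 + β2β4²; (8) α1α4β1 + α4β1β2 + α1β3β4 + β1β4² = α3²β1 + α3β2β3 + α3β3² + β3²β4. -/
/-- The bilinear multiplication on `F × F` determined by the matrix of structure
constants `((a1, a2, a3, a4), (b1, b2, b3, b4))`. -/
def scMul {F : Type*} [Field F] (a1 a2 a3 a4 b1 b2 b3 b4 : F) (x y : F × F) : F × F :=
  (a1 * x.1 * y.1 + a2 * x.1 * y.2 + a3 * x.2 * y.1 + a4 * x.2 * y.2,
   b1 * x.1 * y.1 + b2 * x.1 * y.2 + b3 * x.2 * y.1 + b4 * x.2 * y.2)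

/-- A multiplication `m` on `F × F` is endo-commutative if `(x·x)·(y·y) = (x·y)·(x·y)`. -/
def IsEndoCommutative {F : Type*} [Field F] (m : F × F → F × F → F × F) : Prop :=
  ∀ x y : F × F, m (m x x) (m y y) = m (m x y) (m x y)

/-- the algebra with MSC `((a1,a2,a3,a4),(b1,b2,b3,b4))` is
endo-commutative iff the eight polynomial equations hold. -/
theorem stmt_0 {F : Type*} [Field F] (a1 a2 a3 a4 b1 b2 b3 b4 : F) :
    IsEndoCommutative (scMul a1 a2 a3 a4 b1 b2 b3 b4) ↔
      (a1 ^ 2 * a3 + a1 * a2 * b3 + a3 ^ 2 * b1 + a4 * b1 * b3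
          = a1 ^ 2 * a2 + a2 ^ 2 * b1 + a1 * a3 * b2 + a4 * b1 * b2) ∧
      (a1 ^ 2 * a4 + a1 * a2 * b4 + a3 * a4 * b1 + a4 * b1 * b4
          = a1 * a2 ^ 2 + a2 ^ 2 * b2 + a2 * a3 * b2 + a4 * b2 ^ 2) ∧
      (a1 * a3 * a4 + a2 * a3 * b4 + a3 * a4 * b3 + a4 * b3 * b4
          = a1 * a2 * a4 + a2 * a4 * b2 + a2 * a3 * b4 + a4 * b2 * b4) ∧
      (a1 ^ 2 * a4 + a2 * a4 * b1 + a1 * a3 * b4 + a4 * b1 * b4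
          = a1 * a3 ^ 2 + a2 * a3 * b3 + a3 ^ 2 * b3 + a4 * b3 ^ 2) ∧
      (a1 * a3 * b1 + a1 * b2 * b3 + a3 * b1 * b3 + b1 * b3 * b4
          = a1 * a2 * b1 + a2 * b1 * b2 + a1 * b2 * b3 + b1 * b2 * b4) ∧
      (a1 * a4 * b1 + a1 * b2 * b4 + a4 * b1 * b3 + b1 * b4 ^ 2
          = a2 ^ 2 * b1 + a2 * b2 ^ 2 + a2 * b2 * b3 + b2 ^ 2 * b4) ∧
      (a3 * a4 * b1 + a3 * b2 * b4 + a4 * b3 ^ 2 + b3 * b4 ^ 2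
          = a2 * a4 * b1 + a4 * b2 ^ 2 + a2 * b3 * b4 + b2 * b4 ^ 2) ∧
      (a1 * a4 * b1 + a4 * b1 * b2 + a1 * b3 * b4 + b1 * b4 ^ 2
          = a3 ^ 2 * b1 + a3 * b2 * b3 + a3 * b3 ^ 2 + b3 ^ 2 * b4) := by
  
  constructor
  · intro h
    have hA := h ((1 : F), (0 : F)) ((0 : F), (1 : F))
    have hB := h ((0 : F), (1 : F)) ((1 : F), (0 : F))
    have hC := h ((1 : F), (0 : F)) ((1 : F), (1 : F))
    have hD := h ((0 : F), (1 : F)) ((1 : F), (1 : F))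
    simp only [scMul, Prod.mk.injEq] at hA hB hC hD
    refine ⟨?_, ?_, ?_, ?_, ?_, ?_, ?_, ?_⟩
    · linear_combination hC.1 - hA.1
    · linear_combination hA.1
    · linear_combination hB.1 - hD.1
    · linear_combination hB.1
    · linear_combination hC.2 - hA.2
    · linear_combination hA.2
    · linear_combination hB.2 - hD.2
    · linear_combination hB.2
  · rintro ⟨e1, e2, e3, e4, e5, e6, e7, e8⟩ ⟨X1, X2⟩ ⟨Y1, Y2⟩
    simp only [scMul, Prod.mk.injEq]
    constructor
    · linear_combination (X1^2*Y1*Y2 - X1*X2*Y1^2) * e1 + (X1^2*Y2^2 - X1*X2*Y1*Y2) * e2 +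
        (X1*X2*Y2^2 - X2^2*Y1*Y2) * e3 + (X2^2*Y1^2 - X1*X2*Y1*Y2) * e4
    · linear_combination (X1^2*Y1*Y2 - X1*X2*Y1^2) * e5 + (X1^2*Y2^2 - X1*X2*Y1*Y2) * e6 +
        (X1*X2*Y2^2 - X2^2*Y1*Y2) * e7 + (X2^2*Y1^2 - X1*X2*Y1*Y2) * e8
end

section
/- Let F be a field with char F ≠ 2 and char F ≠ 3. For all α1, α2, α4, β1 ∈ F, the two-dimensional algebra on F × F with matrix of structure constants ((α1, α2, 1+α2, α4), (β1, −α1, 1−α1, −α2)) is not endo-commutative; that is, there exist x, y ∈ F × F with (x·x)·(y·y) ≠ (x·y)·(x·y). -/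
/-- the algebra `A₁(c)` is never endo-commutative (char F ≠ 2, 3). -/
theorem stmt_1 {F : Type*} [Field F] (h2 : ringChar F ≠ 2) (h3 : ringChar F ≠ 3)
    (a1 a2 a4 b1 : F) :
    ∃ x y : F × F,
      scMul a1 a2 (1 + a2) a4 b1 (-a1) (1 - a1) (-a2)
          (scMul a1 a2 (1 + a2) a4 b1 (-a1) (1 - a1) (-a2) x x)
          (scMul a1 a2 (1 + a2) a4 b1 (-a1) (1 - a1) (-a2) y y) ≠
        scMul a1 a2 (1 + a2) a4 b1 (-a1) (1 - a1) (-a2)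
          (scMul a1 a2 (1 + a2) a4 b1 (-a1) (1 - a1) (-a2) x y)
          (scMul a1 a2 (1 + a2) a4 b1 (-a1) (1 - a1) (-a2) x y) := by
  by_cases hb : b1 = 0
  · by_cases ha1 : a1 = 0
    · subst hb ha1
      refine ⟨(0, 1), (1, 0), fun h => ?_⟩
      have h2 := congrArg Prod.snd h
      simp only [scMul] at h2
      exact one_ne_zero (α := F) (by linear_combination -h2)
    · by_cases ha2 : a2 = 0
      · subst hb ha2
        refine ⟨(0, 1), (1, 2 * a1 - 1), fun h => ?_⟩
        have h1 := congrArg Prod.fst h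
        simp only [scMul] at h1
        exact one_ne_zero (α := F) (by linear_combination -h1)
      · subst hb
        refine ⟨(1, 0), (0, 1), fun h => ?_⟩
        have h2 := congrArg Prod.snd h
        simp only [scMul] at h2
        exact mul_ne_zero ha1 ha2 (by linear_combination h2)
  · refine ⟨(1, 0), ((1 - (a1 * a2 + a4 * b1)) / b1, 1), fun h => ?_⟩
    have h2 := congrArg Prod.snd h
    simp only [scMul] at h2
    have hc : b1 * ((1 - (a1 * a2 + a4 * b1)) / b1) = 1 - (a1 * a2 + a4 * b1) := by
      field_simp
    exact one_ne_zero (α := F) (by linear_combination h2 - hc)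
end

section
/- Let F be a field with char F ≠ 2 and char F ≠ 3, and let α1, α4, β2 ∈ F. The two-dimensional algebra on F × F with matrix of structure constants ((α1, 0, 0, α4), (1, β2, 1−α1, 0)) is endo-commutative if and only if α4 = 0. -/
/-- `A₂(c)` is endo-commutative iff `α₄ = 0` (char F ≠ 2, 3). -/
theorem stmt_2 {F : Type*} [Field F] (h2 : ringChar F ≠ 2) (h3 : ringChar F ≠ 3)
    (a1 a4 b2 : F) :
    IsEndoCommutative (scMul a1 0 0 a4 1 b2 (1 - a1) 0) ↔ a4 = 0 := by
  constructor
  · intro h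
    have := congrArg Prod.snd (h (1, 0) (0, 1))
    simp only [scMul] at this
    linear_combination this
  · rintro rfl
    intro x y
    simp only [scMul, Prod.mk.injEq]
    constructor <;> ring
end

section
/- Let F be a field with char F ≠ 2 and char F ≠ 3, and let α1, α4, β2 ∈ F. The two-dimensional algebra on F × F with matrix of structure constants ((α1, 0, 0, α4), (0, β2, 1−α1, 0)) is endo-commutative if and only if α4·(α1² − β2²) = 0, α4·(α1² − (1−α1)²) = 0 and α4·((1−α1)² − β2²) = 0. -/
/-- `A₃(c)` is endo-commutative iff the three equations hold
(char F ≠ 2, 3). -/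
theorem stmt_3 {F : Type*} [Field F] (h2 : ringChar F ≠ 2) (h3 : ringChar F ≠ 3)
    (a1 a4 b2 : F) :
    IsEndoCommutative (scMul a1 0 0 a4 0 b2 (1 - a1) 0) ↔
      a4 * (a1 ^ 2 - b2 ^ 2) = 0 ∧ a4 * (a1 ^ 2 - (1 - a1) ^ 2) = 0 ∧
        a4 * ((1 - a1) ^ 2 - b2 ^ 2) = 0 := by
  constructor
  · intro h
    have e1 := congrArg Prod.fst (h (1, 0) (0, 1))
    have e2 := congrArg Prod.fst (h (0, 1) (1, 0))
    simp only [scMul] at e1 e2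
    have E1 : a4 * (a1 ^ 2 - b2 ^ 2) = 0 := by linear_combination e1
    have E2 : a4 * (a1 ^ 2 - (1 - a1) ^ 2) = 0 := by linear_combination e2
    exact ⟨E1, E2, by linear_combination E1 - E2⟩
  · rintro ⟨e1, e2, e3⟩ x y
    simp only [scMul, Prod.mk.injEq]
    constructor
    · linear_combination (x.2 ^ 2 * y.1 ^ 2 - x.1 * x.2 * y.1 * y.2) * e2 +
        (x.1 ^ 2 * y.2 ^ 2 - x.1 * x.2 * y.1 * y.2) * e1
    · linear_combination (x.1 * x.2 * y.2 ^ 2 - x.2 ^ 2 * y.1 * y.2) * e3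
end

section
/- Let F be a field with char F ≠ 2 and char F ≠ 3. For all β1, β2 ∈ F, the two-dimensional algebra on F × F with matrix of structure constants ((0, 1, 1, 0), (β1, β2, 1, −1)) is not endo-commutative; that is, there exist x, y ∈ F × F with (x·x)·(y·y) ≠ (x·y)·(x·y). -/
/-- `A₄(c)` is never endo-commutative (char F ≠ 2, 3). -/
theorem stmt_4 {F : Type*} [Field F] (h2 : ringChar F ≠ 2) (h3 : ringChar F ≠ 3)
    (b1 b2 : F) :
    ∃ x y : F × F,
      scMul 0 1 1 0 b1 b2 1 (-1) (scMul 0 1 1 0 b1 b2 1 (-1) x x)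
          (scMul 0 1 1 0 b1 b2 1 (-1) y y) ≠
        scMul 0 1 1 0 b1 b2 1 (-1) (scMul 0 1 1 0 b1 b2 1 (-1) x y)
          (scMul 0 1 1 0 b1 b2 1 (-1) x y) := by
  have two : (2 : F) ≠ 0 := Ring.two_ne_zero h2
  by_cases hb : b2 = 0
  · refine ⟨(0, 1), (1, 1), fun h => ?_⟩
    have h1 := congrArg Prod.fst h
    simp [scMul, hb] at h1
    exact two (by linear_combination -h1)
  · refine ⟨(1, 0), (0, 1), fun h => ?_⟩
    have h1 := congrArg Prod.fst h
    simp [scMul] at h1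
    exact mul_ne_zero two hb (by linear_combination -h1)
end

section
/- Let F be a field with char F ≠ 2 and char F ≠ 3. For every α1 ∈ F, the two-dimensional algebra on F × F with matrix of structure constants ((α1, 0, 0, 0), (1, 2α1−1, 1−α1, 0)) is endo-commutative. -/
/-- every algebra `A₅(α₁)` is endo-commutative (char F ≠ 2, 3). -/
theorem stmt_5 {F : Type*} [Field F] (h2 : ringChar F ≠ 2) (h3 : ringChar F ≠ 3)
    (a1 : F) :
    IsEndoCommutative (scMul a1 0 0 0 1 (2 * a1 - 1) (1 - a1) 0) := by
  intro x y
  simp only [scMul, Prod.mk.injEq]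
  constructor <;> ring
end

section
/- Let F be a field with char F ≠ 2 and char F ≠ 3, and let α1, α4 ∈ F. The two-dimensional algebra on F × F with matrix of structure constants ((α1, 0, 0, α4), (0, 1−α1, −α1, 0)) is endo-commutative if and only if α4 = 0 or α1 = 1/2 (where 1/2 denotes the inverse of 2 in F). -/
/-- `A₇(c)` is endo-commutative iff `α₄ = 0` or `α₁ = 1/2`
(char F ≠ 2, 3). -/
theorem stmt_7 {F : Type*} [Field F] (h2 : ringChar F ≠ 2) (h3 : ringChar F ≠ 3)
    (a1 a4 : F) :
    IsEndoCommutative (scMul a1 0 0 a4 0 (1 - a1) (-a1) 0) ↔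
      a4 = 0 ∨ a1 = (2 : F)⁻¹ := by
  have two_ne : (2 : F) ≠ 0 := Ring.two_ne_zero h2
  constructor
  · intro h
    have := h (1, 1) (0, 1)
    simp only [scMul, Prod.mk.injEq] at this
    obtain ⟨h1, -⟩ := this
    have key : a4 * (1 - 2 * a1) = 0 := by linear_combination -h1
    rcases mul_eq_zero.1 key with hk | hk
    · exact Or.inl hk
    · right
      have : (2 : F) * a1 = 1 := by linear_combination -hk
      field_simp
      linear_combination this
  · rintro (rfl | h) <;> intro x y <;> simp only [scMul, Prod.mk.injEq]
    · constructor <;> ring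
    · have h1 : 2 * a1 = 1 := by rw [h]; exact mul_inv_cancel₀ two_ne
      constructor
      · linear_combination (-a4 * (x.1 * x.2 * y.1 * y.2 - x.1 ^ 2 * y.2 ^ 2)) * h1
      · linear_combination (-a4 * (x.2 ^ 2 * y.1 * y.2 - x.1 * x.2 * y.2 ^ 2)) * h1
end

section
/- Let F be a field with char F ≠ 2 and char F ≠ 3. For every β1 ∈ F, the two-dimensional algebra on F × F with matrix of structure constants ((0, 1, 1, 0), (β1, 1, 0, −1)) is not endo-commutative; that is, there exist x, y ∈ F × F with (x·x)·(y·y) ≠ (x·y)·(x·y). -/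
/-- `A₈(β₁)` is never endo-commutative (char F ≠ 2, 3). -/
theorem stmt_8 {F : Type*} [Field F] (h2 : ringChar F ≠ 2) (h3 : ringChar F ≠ 3)
    (b1 : F) :
    ∃ x y : F × F,
      scMul 0 1 1 0 b1 1 0 (-1) (scMul 0 1 1 0 b1 1 0 (-1) x x)
          (scMul 0 1 1 0 b1 1 0 (-1) y y) ≠
        scMul 0 1 1 0 b1 1 0 (-1) (scMul 0 1 1 0 b1 1 0 (-1) x y)
          (scMul 0 1 1 0 b1 1 0 (-1) x y) := by
  refine ⟨(1, 0), (0, 1), fun h => ?_⟩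
  have h1 := congrArg Prod.fst h
  simp only [scMul] at h1
  ring_nf at h1
  exact Ring.two_ne_zero h2 h1.symm
end

section
/- Let F be a field with char F ≠ 2 and char F ≠ 3. Each of the following two-dimensional algebras on F × F, given by their matrices of structure constants, is endo-commutative: ((1/3, 0, 0, 0), (1, 2/3, −1/3, 0)); ((0, 1, 1, 1), (β1, 0, 0, −1)) for every β1 ∈ F; ((0, 0, 0, 1), (β1, 0, 0, 0)) for every β1 ∈ F; ((0, 1, 1, 0), (β1, 0, 0, −1)) for every β1 ∈ F; and ((0, 0, 0, 0), (1, 0, 0, 0)). -/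
/-- the algebras `A₉`, `A₁₀(β₁)`, `A₁₁(β₁)`, `A₁₂(β₁)` and `A₁₃`
are all endo-commutative (char F ≠ 2, 3). -/
theorem stmt_9 {F : Type*} [Field F] (h2 : ringChar F ≠ 2) (h3 : ringChar F ≠ 3) :
    IsEndoCommutative
        (scMul (1 / 3 : F) 0 0 0 1 (2 / 3) (-(1 / 3)) 0) ∧
      (∀ b1 : F, IsEndoCommutative (scMul 0 1 1 1 b1 0 0 (-1))) ∧
      (∀ b1 : F, IsEndoCommutative (scMul 0 0 0 1 b1 0 0 0)) ∧
      (∀ b1 : F, IsEndoCommutative (scMul 0 1 1 0 b1 0 0 (-1))) ∧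
      IsEndoCommutative (scMul (0 : F) 0 0 0 1 0 0 0) := by
  have h3' : (3 : F) ≠ 0 := fun h =>
    h3 (CharP.ringChar_of_prime_eq_zero Nat.prime_three h)
  refine ⟨?_, fun b1 => ?_, fun b1 => ?_, fun b1 => ?_, ?_⟩ <;> intro x y <;>
      simp only [scMul, Prod.mk.injEq, zero_mul, mul_zero, add_zero, zero_add,
        one_mul, neg_mul, mul_neg] <;>
    first
      | (constructor <;> ring)
      | (constructor <;> (field_simp; ring))
      | ring
end

section
/- Let F be a field with more than two elements and let α1, α2, α3, α4, β1, β2, β3, β4 ∈ F. The two-dimensional algebra on F × F with matrix of structure constants ((α1, α2, α3, α4), (β1, β2, β3, β4)) is curled (i.e. for every x ∈ F × F there exists λ ∈ F with x·x = λ • x) if and only if α4 = 0, β1 = 0, α1 = β2 + β3 and β4 = α2 + α3; moreover, in that case x·x = (α1·x1 + β4·x2) • x for every x = (x1, x2). -/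
/-- A multiplication `m` on `F × F` is curled if every square `x·x` is a scalar
multiple of `x`. -/
def IsCurled {F : Type*} [Field F] (m : F × F → F × F → F × F) : Prop :=
  ∀ x : F × F, ∃ lam : F, m x x = lam • x

/-- over a field with more than two elements, the algebra with MSC
`((a1,a2,a3,a4),(b1,b2,b3,b4))` is curled iff `a4 = 0`, `b1 = 0`, `a1 = b2 + b3`
and `b4 = a2 + a3`; in that case `x·x = (a1·x₁ + b4·x₂) • x`. -/
theorem stmt_10 {F : Type*} [Field F] (hcard : ∃ c : F, c ≠ 0 ∧ c ≠ 1)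
    (a1 a2 a3 a4 b1 b2 b3 b4 : F) :
    (IsCurled (scMul a1 a2 a3 a4 b1 b2 b3 b4) ↔
      a4 = 0 ∧ b1 = 0 ∧ a1 = b2 + b3 ∧ b4 = a2 + a3) ∧
    ((a4 = 0 ∧ b1 = 0 ∧ a1 = b2 + b3 ∧ b4 = a2 + a3) →
      ∀ x : F × F, scMul a1 a2 a3 a4 b1 b2 b3 b4 x x = (a1 * x.1 + b4 * x.2) • x) := by
  have key : (a4 = 0 ∧ b1 = 0 ∧ a1 = b2 + b3 ∧ b4 = a2 + a3) →
      ∀ x : F × F, scMul a1 a2 a3 a4 b1 b2 b3 b4 x x = (a1 * x.1 + b4 * x.2) • x := by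
    rintro ⟨h4, h1, h2, h3⟩ x
    simp only [scMul, Prod.smul_mk, smul_eq_mul, Prod.mk.injEq, Prod.smul_def]
    subst h4 h1 h2 h3
    constructor <;> ring
  refine ⟨⟨fun hc => ?_, fun h x => ⟨a1 * x.1 + b4 * x.2, key h x⟩⟩, key⟩
  obtain ⟨c, hc0, hc1⟩ := hcard
  have e10 := hc (1, 0)
  have e01 := hc (0, 1)
  have e11 := hc (1, 1)
  have e1c := hc (1, c)
  obtain ⟨l1, h1⟩ := e10
  obtain ⟨l2, h2⟩ := e01
  obtain ⟨l3, h3⟩ := e11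
  obtain ⟨l4, h4⟩ := e1c
  simp only [scMul, Prod.smul_def, smul_eq_mul, Prod.mk.injEq, mul_one, mul_zero,
    one_mul, zero_mul, add_zero, zero_add, Prod.ext_iff] at h1 h2 h3 h4
  obtain ⟨h1a, h1b⟩ := h1
  obtain ⟨h2a, h2b⟩ := h2
  obtain ⟨h3a, h3b⟩ := h3
  obtain ⟨h4a, h4b⟩ := h4
  -- b1 = 0, a4 = 0
  have hb1 : b1 = 0 := by simpa using h1b
  have ha4 : a4 = 0 := by simpa using h2a
  -- from x=(1,c): b2*c + b3*c + b4*c^2 = (a1 + a2*c + a3*c) * c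
  have hl4 : l4 = a1 + a2 * c + a3 * c := by
    linear_combination -h4a + c * c * ha4
  have hceq : b2 + b3 + b4 * c = a1 + a2 * c + a3 * c := by
    have hc' : (b2 + b3 + b4 * c) * c = (a1 + a2 * c + a3 * c) * c := by
      linear_combination h4b - hb1 + c * hl4
    exact mul_right_cancel₀ hc0 hc'
  have hl3 : l3 = a1 + a2 + a3 := by
    linear_combination -h3a + ha4
  have h1eq : b2 + b3 + b4 = a1 + a2 + a3 := by
    linear_combination h3b - hb1 + hl3
  have hb4 : b4 = a2 + a3 := by
    have hsub : b4 * (c - 1) = (a2 + a3) * (c - 1) := by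
      linear_combination hceq - h1eq
    exact mul_right_cancel₀ (sub_ne_zero.mpr hc1) hsub
  exact ⟨ha4, hb1, by linear_combination hb4 - h1eq, hb4⟩
end

section
/- Let F be a field with char F ≠ 2 and char F ≠ 3, and let α1, α2, α4, β1 ∈ F. The two-dimensional algebra on F × F with matrix of structure constants ((α1, α2, 1+α2, α4), (β1, −α1, 1−α1, −α2)) is curled (i.e. for every x ∈ F × F there exists λ ∈ F with x·x = λ • x) if and only if α1 = 1/3, α2 = −1/3, α4 = 0 and β1 = 0 (where 1/3 denotes the inverse of 3 in F). -/
lemma stmt13_three_ne_zero {F : Type*} [Field F] (h3 : ringChar F ≠ 3) : (3 : F) ≠ 0 := by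
  intro h
  exact h3 (CharP.ringChar_of_prime_eq_zero Nat.prime_three (by push_cast; exact h))

/-- `A₁(c)` is curled iff `α₁ = 1/3`, `α₂ = -1/3`, `α₄ = 0` and
`β₁ = 0` (char F ≠ 2, 3). -/
theorem stmt_13 {F : Type*} [Field F] (h2 : ringChar F ≠ 2) (h3 : ringChar F ≠ 3)
    (a1 a2 a4 b1 : F) :
    IsCurled (scMul a1 a2 (1 + a2) a4 b1 (-a1) (1 - a1) (-a2)) ↔
      a1 = (3 : F)⁻¹ ∧ a2 = -(3 : F)⁻¹ ∧ a4 = 0 ∧ b1 = 0 := by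
  have h3' : (3 : F) ≠ 0 := stmt13_three_ne_zero h3
  have h2' : (2 : F) ≠ 0 := Ring.two_ne_zero h2
  constructor
  · intro h
    obtain ⟨l1, hl1⟩ := h (1, 0)
    obtain ⟨l2, hl2⟩ := h (0, 1)
    obtain ⟨l3, hl3⟩ := h (1, 1)
    obtain ⟨l4, hl4⟩ := h (1, -1)
    simp only [scMul, Prod.smul_mk, smul_eq_mul, Prod.mk.injEq] at hl1 hl2 hl3 hl4
    obtain ⟨e1, e2⟩ := hl1
    obtain ⟨e3, e4⟩ := hl2
    obtain ⟨e5, e6⟩ := hl3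
    obtain ⟨e7, e8⟩ := hl4
    -- e2 : b1 = 0 (RHS l1 * 0 = 0), e3 : a4 = 0
    have hb1 : b1 = 0 := by linear_combination e2
    have ha4 : a4 = 0 := by linear_combination e3
    -- from x=(1,1): a1 + 1 + 2a2 = l3, b1 + 1 - 2a1 - a2 = l3
    have key1 : a1 + a2 = 0 := by
      have h9 : (3 : F) * (a1 + a2) = 0 := by linear_combination e5 - e6 + hb1 - ha4
      exact (mul_eq_zero.mp h9).resolve_left h3'
    have key2 : (3 : F) * (a1 - a2) = 2 := by linear_combination e7 + e8 - hb1 - ha4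
    have ha1 : a1 = (3 : F)⁻¹ := by
      have hkey : (2 : F) * ((3 : F) * a1 - 1) = 0 := by linear_combination 3 * key1 + key2
      have h0 : (3 : F) * a1 - 1 = 0 := (mul_eq_zero.mp hkey).resolve_left h2'
      field_simp
      linear_combination h0
    refine ⟨ha1, ?_, ha4, hb1⟩
    have : a2 = -a1 := by linear_combination key1
    rw [this, ha1]
  · rintro ⟨ha1, ha2, ha4, hb1⟩ x
    refine ⟨(x.1 + x.2) / 3, ?_⟩
    simp only [scMul, Prod.smul_mk, smul_eq_mul, Prod.mk.injEq, Prod.smul_def]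
    subst ha1 ha2 ha4 hb1
    constructor <;> field_simp <;> ring
end

section
/- Let F be a field with char F ≠ 2 and char F ≠ 3, and let · be a bilinear multiplication on F × F that is not identically zero and is curled (for every x there exists λ ∈ F with x·x = λ • x). Then (F × F, ·) is isomorphic to exactly one of the following algebras, given by their matrices of structure constants: ((1/3, −1/3, 2/3, 0), (0, −1/3, 2/3, 1/3)); ((α1, 0, 0, 0), (0, 2α1−1, 1−α1, 0)) for some α1 ∈ F; or ((1/3, 0, 0, 0), (0, 2/3, −1/3, 0)). Here 'exactly one' means in addition that no two distinct algebras of this list (in particular for distinct values of α1) are isomorphic to each other. -/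
/-- `m` is bilinear (linear in each argument). -/
def IsBilinearMul {F : Type*} [Field F] (m : F × F → F × F → F × F) : Prop :=
  (∀ (a : F) (x x' y : F × F), m (a • x + x') y = a • m x y + m x' y) ∧
  (∀ (a : F) (x y y' : F × F), m x (a • y + y') = a • m x y + m x y')

/-- Two multiplications on `F × F` are isomorphic if some `F`-linear
equivalence `g` of `F × F` satisfies `g (x·y) = g x ∘ g y`. -/
def AlgIso {F : Type*} [Field F] (m₁ m₂ : F × F → F × F → F × F) : Prop :=
  ∃ g : (F × F) ≃ₗ[F] F × F, ∀ x y, g (m₁ x y) = m₂ (g x) (g y)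

/-- The list of curled algebras of Theorem 6 (char F ≠ 2, 3):
`Sum.inr true` is `A₁(1/3, -1/3, 0, 0)`, `Sum.inl a1` is `A₃(a1, 0, 2a1 - 1)`,
and `Sum.inr false` is `A₇(1/3, 0)`. -/
def curledFamily {F : Type*} [Field F] : F ⊕ Bool → (F × F → F × F → F × F)
  | Sum.inr true => scMul (1 / 3) (-(1 / 3)) (2 / 3) 0 0 (-(1 / 3)) (2 / 3) (1 / 3)
  | Sum.inl a1 => scMul a1 0 0 0 0 (2 * a1 - 1) (1 - a1) 0
  | Sum.inr false => scMul (1 / 3) 0 0 0 0 (2 / 3) (-(1 / 3)) 0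

/-!
A curled multiplication satisfies `x·x = ℓ(x) x` with `ℓ` linear, so by polarization
`x·y + y·x = ℓ(x) y + ℓ(y) x`; the antisymmetric part is `det(x, y) w` for the single vector
`w = e₁·e₂ - e₂·e₁`. Writing `ℓ = det(·, n)`, the algebra is determined by the pair `(n, w)`, and a
linear equivalence `g` is an isomorphism exactly when it sends `(n, w)` to `det g • (n', w')`.
Under this twisted action the invariants are whether `n = 0`, whether `det(n, w) = 0`, and, when
`w = δ n`, the scalar `δ`; the listed algebras are one representative of each orbit.
-/

section Curled

variable {F : Type*} [Field F]

lemma AlgIso.symm {m₁ m₂ : F × F → F × F → F × F} (h : AlgIso m₁ m₂) : AlgIso m₂ m₁ := by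
  obtain ⟨g, hg⟩ := h
  refine ⟨g.symm, fun x y => g.injective ?_⟩
  rw [hg, g.apply_symm_apply, g.apply_symm_apply, g.apply_symm_apply]

lemma AlgIso.trans {m₁ m₂ m₃ : F × F → F × F → F × F} (h : AlgIso m₁ m₂) (h' : AlgIso m₂ m₃) :
    AlgIso m₁ m₃ := by
  obtain ⟨g, hg⟩ := h
  obtain ⟨g', hg'⟩ := h'
  exact ⟨g.trans g', fun x y => by simp [hg, hg']⟩

def det2 (x y : F × F) : F := x.1 * y.2 - x.2 * y.1

lemma eq_of_forall_det2_smul_self_eq {u v : F × F} (h : ∀ z, det2 z u • z = det2 z v • z) :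
    u = v := by
  have h1 := congrArg Prod.fst (h (1, 0))
  have h2 := congrArg Prod.snd (h (0, 1))
  simp only [det2, Prod.smul_fst, Prod.smul_snd, smul_eq_mul] at h1 h2
  ext
  · linear_combination -h2
  · linear_combination h1

lemma exists_det2_eq {v : F × F} (hv : v ≠ 0) (c : F) : ∃ a, det2 a v = c := by
  by_cases hv2 : v.2 = 0
  · have hv1 : v.1 ≠ 0 := fun hv1 => hv (Prod.ext hv1 hv2)
    exact ⟨(0, -c / v.1), by simp [det2, hv1]⟩
  · exact ⟨(c / v.2, 0), by simp [det2, hv2]⟩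

lemma exists_eq_smul_of_det2_eq_zero {n w : F × F} (hn : n ≠ 0) (h : det2 n w = 0) :
    ∃ c : F, w = c • n := by
  simp only [det2] at h
  by_cases hn1 : n.1 = 0
  · have hn2 : n.2 ≠ 0 := fun hn2 => hn (Prod.ext hn1 hn2)
    refine ⟨w.2 / n.2, Prod.ext ?_ ?_⟩
    · simpa [hn1, hn2] using h
    · simp [hn2]
  · refine ⟨w.1 / n.1, Prod.ext ?_ ?_⟩
    · simp [hn1]
    · simp only [Prod.smul_snd, smul_eq_mul]
      field_simp
      linear_combination h

lemma LinearMap.apply_eq_smul_add_smul {M : Type*} [AddCommGroup M] [Module F M]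
    (f : (F × F) →ₗ[F] M) (x : F × F) : f x = x.1 • f (1, 0) + x.2 • f (0, 1) := by
  conv_lhs => rw [show x = x.1 • ((1 : F), (0 : F)) + x.2 • ((0 : F), (1 : F)) by ext <;> simp]
  rw [map_add, map_smul, map_smul]

lemma LinearMap.det_eq_det2 (f : (F × F) →ₗ[F] F × F) :
    LinearMap.det f = det2 (f (1, 0)) (f (0, 1)) := by
  rw [← LinearMap.det_toMatrix (Module.Basis.finTwoProd F), Matrix.det_fin_two]
  simp [LinearMap.toMatrix_apply, det2]
  ring

lemma det2_map (f : (F × F) →ₗ[F] F × F) (x y : F × F) :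
    det2 (f x) (f y) = LinearMap.det f * det2 x y := by
  rw [f.det_eq_det2, f.apply_eq_smul_add_smul x, f.apply_eq_smul_add_smul y]
  simp only [det2, Prod.fst_add, Prod.snd_add, Prod.smul_fst, Prod.smul_snd, smul_eq_mul]
  ring

lemma det2_linearEquiv (g : (F × F) ≃ₗ[F] F × F) (x y : F × F) :
    det2 (g x) (g y) = LinearEquiv.det g * det2 x y := by
  rw [LinearEquiv.coe_det]
  exact det2_map g.toLinearMap x y

/-- `x·y = ½ (ℓ(x) y + ℓ(y) x + det(x, y) w)` with `ℓ = det2 · n`, so that `x·x = ℓ(x) x` and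
`e₁·e₂ - e₂·e₁ = w`. -/
def curledMul (n w : F × F) (x y : F × F) : F × F :=
  (2 : F)⁻¹ • (det2 x n • y + det2 y n • x + det2 x y • w)

variable {n w n' w' : F × F}

lemma curledMul_self (h2 : (2 : F) ≠ 0) (x : F × F) : curledMul n w x x = det2 x n • x := by
  ext <;> simp [curledMul, det2] <;> field_simp <;> ring

lemma curledMul_sub_swap (h2 : (2 : F) ≠ 0) (x y : F × F) :
    curledMul n w x y - curledMul n w y x = det2 x y • w := by
  ext <;> simp [curledMul, det2] <;> field_simp <;> ring

variable {m : F × F → F × F → F × F}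

def IsBilinearMul.toLinearMap₂ (hm : IsBilinearMul m) : (F × F) →ₗ[F] (F × F) →ₗ[F] F × F :=
  have zero_left : ∀ y, m 0 y = 0 := fun y => by simpa using hm.1 (-1) y y y
  have zero_right : ∀ x, m x 0 = 0 := fun x => by simpa using hm.2 (-1) x x x
  LinearMap.mk₂ F m (fun x x' y => by simpa using hm.1 1 x x' y)
    (fun a x y => by simpa [zero_left] using hm.1 a x 0 y)
    (fun x y y' => by simpa using hm.2 1 x y y')
    (fun a x y => by simpa [zero_right] using hm.2 a x y 0)

lemma IsBilinearMul.apply_eq_smul_add_smul (hm : IsBilinearMul m) (x y : F × F) :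
    m x y = x.1 • (y.1 • m (1, 0) (1, 0) + y.2 • m (1, 0) (0, 1)) +
      x.2 • (y.1 • m (0, 1) (1, 0) + y.2 • m (0, 1) (0, 1)) := by
  change hm.toLinearMap₂ x y = _
  rw [hm.toLinearMap₂.apply_eq_smul_add_smul x, LinearMap.add_apply, LinearMap.smul_apply,
    LinearMap.smul_apply, (hm.toLinearMap₂ (1, 0)).apply_eq_smul_add_smul y,
    (hm.toLinearMap₂ (0, 1)).apply_eq_smul_add_smul y]
  rfl

lemma IsBilinearMul.exists_eq_curledMul (h2 : (2 : F) ≠ 0) (hm : IsBilinearMul m)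
    (hcur : IsCurled m) : ∃ n w : F × F, m = curledMul n w := by
  obtain ⟨a, ha⟩ := hcur (1, 0)
  obtain ⟨d, hd⟩ := hcur (0, 1)
  obtain ⟨s, hs⟩ := hcur (1, 1)
  obtain ⟨t, ht⟩ := hcur (1, -1)
  rw [hm.apply_eq_smul_add_smul, ha, hd] at hs ht
  simp only [Prod.ext_iff, Prod.fst_add, Prod.snd_add, Prod.smul_fst, Prod.smul_snd,
    smul_eq_mul] at hs ht
  obtain ⟨hs1, hs2⟩ := hs
  obtain ⟨ht1, ht2⟩ := ht
  -- comparing the squares of `e₁ + e₂` and `e₁ - e₂` gives `e₁·e₂ + e₂·e₁ = (d, a)`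
  have hsym1 : (m (1, 0) (0, 1)).1 + (m (0, 1) (1, 0)).1 = d :=
    mul_left_cancel₀ h2 (by linear_combination hs1 - ht1 - hs2 - ht2)
  have hsym2 : (m (1, 0) (0, 1)).2 + (m (0, 1) (1, 0)).2 = a :=
    mul_left_cancel₀ h2 (by linear_combination hs2 - ht2 - hs1 - ht1)
  refine ⟨(-d, a), m (1, 0) (0, 1) - m (0, 1) (1, 0), funext fun x => funext fun y => ?_⟩
  rw [hm.apply_eq_smul_add_smul x y, ha, hd]
  ext <;> simp [curledMul, det2] <;> field_simp
  · linear_combination (x.1 * y.2 + x.2 * y.1) * hsym1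
  · linear_combination (x.1 * y.2 + x.2 * y.1) * hsym2

lemma algIso_curledMul_of_linearEquiv (g : (F × F) ≃ₗ[F] F × F)
    (hn : g n = (LinearEquiv.det g : F) • n') (hw : g w = (LinearEquiv.det g : F) • w') :
    AlgIso (curledMul n w) (curledMul n' w') := by
  have hD : (LinearEquiv.det g : F) ≠ 0 := (LinearEquiv.det g).ne_zero
  have hform : ∀ x, det2 (g x) n' = det2 x n := fun x => by
    apply mul_left_cancel₀ hD
    calc _ = det2 (g x) ((LinearEquiv.det g : F) • n') := by
          simp only [det2, Prod.smul_fst, Prod.smul_snd, smul_eq_mul]; ring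
      _ = _ := by rw [← hn, det2_linearEquiv]
  refine ⟨g, fun x y => ?_⟩
  simp only [curledMul, map_smul, map_add, hw, hform, det2_linearEquiv, smul_smul]
  ring_nf

lemma AlgIso.exists_linearEquiv_of_curledMul (h2 : (2 : F) ≠ 0)
    (h : AlgIso (curledMul n w) (curledMul n' w')) :
    ∃ g : (F × F) ≃ₗ[F] F × F,
      g n = (LinearEquiv.det g : F) • n' ∧ g w = (LinearEquiv.det g : F) • w' := by
  obtain ⟨g, hg⟩ := h
  refine ⟨g, eq_of_forall_det2_smul_self_eq fun z => ?_, ?_⟩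
  · have hsq := hg (g.symm z) (g.symm z)
    rw [curledMul_self h2, curledMul_self h2, map_smul, g.apply_symm_apply] at hsq
    calc det2 z (g n) • z = (LinearEquiv.det g : F) • det2 (g.symm z) n • z := by
          rw [← g.apply_symm_apply z, det2_linearEquiv, g.apply_symm_apply, smul_smul]
      _ = _ := by
          rw [hsq, smul_smul]
          simp only [det2, Prod.smul_fst, Prod.smul_snd, smul_eq_mul]
          ring_nf
  · have hcomm := congrArg g (curledMul_sub_swap (n := n) (w := w) h2 (1, 0) (0, 1))
    rw [map_sub, hg, hg, curledMul_sub_swap h2, det2_linearEquiv] at hcomm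
    simpa [det2] using hcomm.symm

lemma AlgIso.curledMul_left_eq_zero (h2 : (2 : F) ≠ 0)
    (h : AlgIso (curledMul n w) (curledMul n' w')) (hn : n = 0) : n' = 0 := by
  obtain ⟨g, hgn, -⟩ := h.exists_linearEquiv_of_curledMul h2
  rw [hn, map_zero, eq_comm, smul_eq_zero] at hgn
  exact hgn.resolve_left (LinearEquiv.det g).ne_zero

lemma AlgIso.curledMul_det2_eq_zero (h2 : (2 : F) ≠ 0)
    (h : AlgIso (curledMul n w) (curledMul n' w')) (hnw : det2 n w = 0) : det2 n' w' = 0 := by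
  obtain ⟨g, hgn, hgw⟩ := h.exists_linearEquiv_of_curledMul h2
  have hdet := det2_linearEquiv g n w
  rw [hgn, hgw, hnw, mul_zero] at hdet
  have hD := (LinearEquiv.det g).ne_zero
  have hDD : (LinearEquiv.det g : F) * LinearEquiv.det g * det2 n' w' = 0 := by
    rw [← hdet]
    simp only [det2, Prod.smul_fst, Prod.smul_snd, smul_eq_mul]
    ring
  exact (mul_eq_zero.mp hDD).resolve_left (mul_ne_zero hD hD)

lemma AlgIso.curledMul_eq_smul (h2 : (2 : F) ≠ 0)
    (h : AlgIso (curledMul n w) (curledMul n' w')) {c : F} (hw : w = c • n) : w' = c • n' := by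
  obtain ⟨g, hgn, hgw⟩ := h.exists_linearEquiv_of_curledMul h2
  rw [hw, map_smul, hgn, smul_comm] at hgw
  exact (smul_right_injective _ (LinearEquiv.det g).ne_zero hgw).symm

lemma algIso_curledMul_of_columns {a b : F × F} (hab : det2 a b ≠ 0)
    (hn : n.1 • a + n.2 • b = det2 a b • n') (hw : w.1 • a + w.2 • b = det2 a b • w') :
    AlgIso (curledMul n w) (curledMul n' w') := by
  let f : (F × F) →ₗ[F] F × F :=
    (LinearMap.fst F F F).smulRight a + (LinearMap.snd F F F).smulRight b
  have hf : LinearMap.det f = det2 a b := by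
    rw [f.det_eq_det2]
    simp [f]
  apply algIso_curledMul_of_linearEquiv (f.equivOfDetNeZero (hf ▸ hab))
  · rw [LinearEquiv.coe_det]
    simpa [f, hf] using hn
  · rw [LinearEquiv.coe_det]
    simpa [f, hf] using hw

lemma algIso_curledMul_smul_smul {v : F × F} (hv : v ≠ 0) {c : F} (hc : c ≠ 0) (p q : F) :
    AlgIso (curledMul (0, c * p) (0, c * q)) (curledMul (p • v) (q • v)) := by
  obtain ⟨a, ha⟩ := exists_det2_eq hv c
  refine algIso_curledMul_of_columns (a := a) (b := v) (ha ▸ hc) ?_ ?_ <;>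
    simp [ha, smul_smul]

lemma algIso_curledMul_of_det2_ne_zero (h : det2 n w ≠ 0) (h' : det2 n' w' ≠ 0) :
    AlgIso (curledMul n w) (curledMul n' w') := by
  -- `(a b) = D • (n' w') (n w)⁻¹`, where taking determinants forces `D = det2 n w / det2 n' w'`
  set a := (det2 n' w')⁻¹ • (w.2 • n' - n.2 • w')
  set b := (det2 n' w')⁻¹ • (n.1 • w' - w.1 • n')
  have hab : det2 a b = det2 n w / det2 n' w' := by
    have h'' : n'.1 * w'.2 - n'.2 * w'.1 ≠ 0 := h'
    simp only [a, b, det2, Prod.smul_fst, Prod.smul_snd, Prod.fst_sub, Prod.snd_sub, smul_eq_mul]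
    field_simp
    ring
  refine algIso_curledMul_of_columns (a := a) (b := b) (hab ▸ div_ne_zero h h') ?_ ?_ <;>
  · rw [hab]
    ext <;> simp [a, b, det2] <;> field_simp <;> ring

lemma curledFamily_inl (h2 : (2 : F) ≠ 0) (t : F) :
    curledFamily (Sum.inl t) = curledMul (0, t) (0, 3 * t - 2) := by
  funext x y
  ext <;> simp [curledFamily, scMul, curledMul, det2] <;> field_simp <;> ring

lemma curledFamily_inr_false (h2 : (2 : F) ≠ 0) (h3 : (3 : F) ≠ 0) :
    curledFamily (Sum.inr false) = curledMul ((0 : F), 1 / 3) (0, 1) := by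
  funext x y
  ext <;> simp [curledFamily, scMul, curledMul, det2] <;> field_simp <;> ring

lemma curledFamily_inr_true (h2 : (2 : F) ≠ 0) (h3 : (3 : F) ≠ 0) :
    curledFamily (Sum.inr true) = curledMul (-(1 / 3 : F), 1 / 3) (-1, -1) := by
  funext x y
  ext <;> simp [curledFamily, scMul, curledMul, det2] <;> field_simp <;> ring

lemma exists_algIso_curledFamily (h2 : (2 : F) ≠ 0) (h3 : (3 : F) ≠ 0) (hnw : n ≠ 0 ∨ w ≠ 0) :
    ∃ i, AlgIso (curledFamily i) (curledMul n w) := by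
  by_cases hdet : det2 n w = 0
  · by_cases hn : n = 0
    · subst hn
      refine ⟨Sum.inl 0, ?_⟩
      rw [curledFamily_inl h2]
      convert algIso_curledMul_smul_smul (hnw.resolve_left fun hn => hn rfl)
        (neg_ne_zero.mpr h2) 0 1 using 2 <;> simp
    · obtain ⟨δ, rfl⟩ := exists_eq_smul_of_det2_eq_zero hn hdet
      by_cases hδ : δ = 3
      · subst hδ
        refine ⟨Sum.inr false, ?_⟩
        rw [curledFamily_inr_false h2 h3]
        convert algIso_curledMul_smul_smul hn (one_div_ne_zero h3) 1 3 using 3 <;> simp [h3]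
      · -- `t = 2 / (3 - δ)` is the solution of `3 t - 2 = δ t`
        have h3δ : 3 - δ ≠ 0 := sub_ne_zero.mpr (Ne.symm hδ)
        refine ⟨Sum.inl (2 / (3 - δ)), ?_⟩
        rw [curledFamily_inl h2]
        convert algIso_curledMul_smul_smul hn (div_ne_zero h2 h3δ) 1 δ using 3
        · simp
        · field_simp
          ring
        · simp
  · refine ⟨Sum.inr true, ?_⟩
    rw [curledFamily_inr_true h2 h3]
    refine algIso_curledMul_of_det2_ne_zero ?_ hdet
    simp [det2, ← two_mul, h2, h3]

lemma not_algIso_curledFamily_inr_true (h2 : (2 : F) ≠ 0) (h3 : (3 : F) ≠ 0)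
    (h : det2 n w = 0) : ¬AlgIso (curledMul n w) (curledFamily (Sum.inr true)) := by
  rw [curledFamily_inr_true h2 h3]
  intro hiso
  simpa [det2, ← two_mul, h2, h3] using hiso.curledMul_det2_eq_zero h2 h

lemma not_algIso_curledFamily_inr_false_inl (h2 : (2 : F) ≠ 0) (h3 : (3 : F) ≠ 0) (t : F) :
    ¬AlgIso (curledFamily (Sum.inr false)) (curledFamily (Sum.inl t)) := by
  rw [curledFamily_inr_false h2 h3, curledFamily_inl h2]
  intro hiso
  exact h2 (by simpa using congrArg Prod.snd (hiso.curledMul_eq_smul h2 (c := 3) (by simp [h3])))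

lemma eq_of_algIso_curledFamily_inl (h2 : (2 : F) ≠ 0) {t t' : F}
    (h : AlgIso (curledFamily (Sum.inl t)) (curledFamily (Sum.inl t'))) : t = t' := by
  rw [curledFamily_inl h2, curledFamily_inl h2] at h
  by_cases ht : t = 0
  · subst ht
    exact (congrArg Prod.snd (h.curledMul_left_eq_zero h2 rfl)).symm
  by_cases ht' : t' = 0
  · subst ht'
    exact congrArg Prod.snd (h.symm.curledMul_left_eq_zero h2 rfl)
  have key := congrArg Prod.snd
    (h.curledMul_eq_smul h2 (c := (3 * t - 2) / t) (by ext <;> simp [ht]))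
  simp only [Prod.smul_snd, smul_eq_mul] at key
  field_simp at key
  apply mul_left_cancel₀ h2
  linear_combination -key

lemma curledFamily_eq_of_algIso (h2 : (2 : F) ≠ 0) (h3 : (3 : F) ≠ 0) {i j : F ⊕ Bool}
    (h : AlgIso (curledFamily i) (curledFamily j)) : i = j := by
  have hinl : ∀ t : F, det2 ((0 : F), t) (0, 3 * t - 2) = 0 := fun t => by simp [det2]
  have hfalse : det2 ((0 : F), 1 / 3) (0, 1) = 0 := by simp [det2]
  obtain t | ⟨_ | _⟩ := i <;> obtain t' | ⟨_ | _⟩ := j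
  · rw [eq_of_algIso_curledFamily_inl h2 h]
  · exact absurd h.symm (not_algIso_curledFamily_inr_false_inl h2 h3 t)
  · rw [curledFamily_inl h2] at h
    exact absurd h (not_algIso_curledFamily_inr_true h2 h3 (hinl t))
  · exact absurd h (not_algIso_curledFamily_inr_false_inl h2 h3 t')
  · rfl
  · rw [curledFamily_inr_false h2 h3] at h
    exact absurd h (not_algIso_curledFamily_inr_true h2 h3 hfalse)
  · rw [curledFamily_inl h2] at h
    exact absurd h.symm (not_algIso_curledFamily_inr_true h2 h3 (hinl t'))
  · rw [curledFamily_inr_false h2 h3] at h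
    exact absurd h.symm (not_algIso_curledFamily_inr_true h2 h3 hfalse)
  · rfl

end Curled

/-- any nonzero bilinear curled multiplication on `F × F`
(char F ≠ 2, 3) is isomorphic to exactly one member of `curledFamily`, and the
members of `curledFamily` are pairwise non-isomorphic. -/
theorem stmt_14 {F : Type*} [Field F] (h2 : ringChar F ≠ 2) (h3 : ringChar F ≠ 3)
    (m : F × F → F × F → F × F) (hbil : IsBilinearMul m)
    (hnz : ¬ ∀ x y, m x y = 0) (hcur : IsCurled m) :
    (∃! i : F ⊕ Bool, AlgIso m (curledFamily i)) ∧
      ∀ i j : F ⊕ Bool, i ≠ j → ¬ AlgIso (curledFamily i) (curledFamily j) := by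
  have h2' : (2 : F) ≠ 0 := Ring.two_ne_zero h2
  have h3' : (3 : F) ≠ 0 := fun h =>
    h3 (CharP.ringChar_of_prime_eq_zero Nat.prime_three (by exact_mod_cast h))
  obtain ⟨n, w, rfl⟩ := hbil.exists_eq_curledMul h2' hcur
  have hnw : n ≠ 0 ∨ w ≠ 0 := by
    by_contra! h
    obtain ⟨rfl, rfl⟩ := h
    exact hnz fun x y => by simp [curledMul, det2]
  obtain ⟨i, hi⟩ := exists_algIso_curledFamily h2' h3' hnw
  refine ⟨⟨i, hi.symm, fun j hj => ?_⟩, fun i j hij h => hij (curledFamily_eq_of_algIso h2' h3' h)⟩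
  exact (curledFamily_eq_of_algIso h2' h3' (hi.trans hj)).symm
end

section
/- Let F = ℤ/2ℤ and let · be a bilinear multiplication on F × F that is not identically zero, is endo-commutative ((x·x)·(y·y) = (x·y)·(x·y) for all x, y) and is curled (for every x there exists λ ∈ F with x·x = λ • x). Then (F × F, ·) is isomorphic to exactly one of the following seven algebras, given by their matrices of structure constants: ((0, 0, 0, 0), (0, 1, 1, 0)); ((1, 0, 0, 0), (0, 1, 0, 0)); ((0, 1, 1, 0), (0, 0, 1, 1)); ((1, 1, 1, 0), (0, 0, 0, 1)); ((1, 0, 0, 0), (0, 0, 1, 0)); ((0, 1, 1, 0), (0, 1, 0, 1)); ((1, 1, 1, 0), (0, 1, 1, 1)). Here 'exactly one' means in addition that these seven algebras are pairwise non-isomorphic. -/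
/-- The seven endo-commutative curled algebras over `ℤ/2ℤ` (Theorem 13). -/
def ecCurledFamilyZ2 : Fin 7 → (ZMod 2 × ZMod 2 → ZMod 2 × ZMod 2 → ZMod 2 × ZMod 2)
  | 0 => scMul 0 0 0 0 0 1 1 0
  | 1 => scMul 1 0 0 0 0 1 0 0
  | 2 => scMul 0 1 1 0 0 0 1 1
  | 3 => scMul 1 1 1 0 0 0 0 1
  | 4 => scMul 1 0 0 0 0 0 1 0
  | 5 => scMul 0 1 1 0 0 1 0 1
  | 6 => scMul 1 1 1 0 0 1 1 1

lemma Prod.eq_fst_smul_add_snd_smul {F : Type*} [Field F] (x : F × F) :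
    x = x.1 • (1, 0) + x.2 • (0, 1) := by
  ext <;> simp

section Bilinear

variable {F : Type*} [Field F] {m : F × F → F × F → F × F}

namespace IsBilinearMul

variable (hm : IsBilinearMul m)
include hm

lemma zero_left (y : F × F) : m 0 y = 0 := by
  simpa using hm.1 1 0 0 y

lemma zero_right (x : F × F) : m x 0 = 0 := by
  simpa using hm.2 1 x 0 0

lemma smul_left (a : F) (x y : F × F) : m (a • x) y = a • m x y := by
  simpa [hm.zero_left] using hm.1 a x 0 y

lemma smul_right (a : F) (x y : F × F) : m x (a • y) = a • m x y := by
  simpa [hm.zero_right] using hm.2 a x y 0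

lemma eq_smul_add_smul_left (x y : F × F) : m x y = x.1 • m (1, 0) y + x.2 • m (0, 1) y := by
  conv_lhs => rw [Prod.eq_fst_smul_add_snd_smul x, hm.1, hm.smul_left]

lemma eq_smul_add_smul_right (x y : F × F) : m x y = y.1 • m x (1, 0) + y.2 • m x (0, 1) := by
  conv_lhs => rw [Prod.eq_fst_smul_add_snd_smul y, hm.2, hm.smul_right]

lemma eq_scMul :
    m = scMul (m (1, 0) (1, 0)).1 (m (1, 0) (0, 1)).1 (m (0, 1) (1, 0)).1 (m (0, 1) (0, 1)).1
      (m (1, 0) (1, 0)).2 (m (1, 0) (0, 1)).2 (m (0, 1) (1, 0)).2 (m (0, 1) (0, 1)).2 := by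
  funext x y
  rw [hm.eq_smul_add_smul_left, hm.eq_smul_add_smul_right (1, 0), hm.eq_smul_add_smul_right (0, 1)]
  ext <;>
    simp only [scMul, Prod.fst_add, Prod.snd_add, Prod.smul_fst, Prod.smul_snd, smul_eq_mul] <;>
    ring

end IsBilinearMul

end Bilinear

section Iso

variable {F : Type*} [Field F]

def linOfCols (u v : F × F) : (F × F) →ₗ[F] F × F :=
  (LinearMap.fst F F F).smulRight u + (LinearMap.snd F F F).smulRight v

@[simp]
lemma linOfCols_apply_fst (u v z : F × F) : (linOfCols u v z).1 = z.1 * u.1 + z.2 * v.1 := rfl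

@[simp]
lemma linOfCols_apply_snd (u v z : F × F) : (linOfCols u v z).2 = z.1 * u.2 + z.2 * v.2 := rfl

lemma LinearMap.eq_linOfCols (f : (F × F) →ₗ[F] F × F) :
    f = linOfCols (f (1, 0)) (f (0, 1)) := by
  refine LinearMap.ext fun z => ?_
  conv_lhs => rw [Prod.eq_fst_smul_add_snd_smul z, map_add, map_smul, map_smul]
  rfl

lemma linOfCols_injective_iff (u v : F × F) :
    Function.Injective (linOfCols u v) ↔ u.1 * v.2 - u.2 * v.1 ≠ 0 := by
  rw [injective_iff_map_eq_zero]
  simp only [Prod.ext_iff, linOfCols_apply_fst, linOfCols_apply_snd, Prod.fst_zero,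
    Prod.snd_zero]
  constructor
  · intro hinj hdet
    -- both `(v.2, -u.2)` and `(-v.1, u.1)` lie in the kernel, so injectivity forces `u = v = 0`
    have h₁ := hinj (v.2, -u.2) ⟨by linear_combination hdet, by ring⟩
    have h₂ := hinj (-v.1, u.1) ⟨by ring, by linear_combination hdet⟩
    simp only [neg_eq_zero] at h₁ h₂
    simpa [h₁, h₂] using hinj (1, 0)
  · intro hdet z hz
    refine ⟨(mul_eq_zero.1 ?_).resolve_right hdet, (mul_eq_zero.1 ?_).resolve_right hdet⟩
    · linear_combination v.2 * hz.1 - v.1 * hz.2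
    · linear_combination u.1 * hz.2 - u.2 * hz.1

/-- `AlgIso` with the equivalence given by its columns; unlike `AlgIso`, this is decidable over a
finite field. -/
def AlgIsoByCols (m₁ m₂ : F × F → F × F → F × F) : Prop :=
  ∃ u v : F × F, u.1 * v.2 - u.2 * v.1 ≠ 0 ∧
    ∀ x y, linOfCols u v (m₁ x y) = m₂ (linOfCols u v x) (linOfCols u v y)

lemma algIso_iff_algIsoByCols (m₁ m₂ : F × F → F × F → F × F) :
    AlgIso m₁ m₂ ↔ AlgIsoByCols m₁ m₂ := by
  constructor
  · rintro ⟨g, hg⟩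
    have hg' : (g : (F × F) →ₗ[F] F × F) = linOfCols (g (1, 0)) (g (0, 1)) :=
      LinearMap.eq_linOfCols _
    refine ⟨g (1, 0), g (0, 1), (linOfCols_injective_iff _ _).1 ?_, fun x y => ?_⟩
    · rw [← hg']; exact g.injective
    · simpa only [← hg', LinearEquiv.coe_coe] using hg x y
  · rintro ⟨u, v, hdet, h⟩
    have hinj := (linOfCols_injective_iff u v).2 hdet
    exact ⟨.ofBijective _ ⟨hinj, LinearMap.injective_iff_surjective.1 hinj⟩, h⟩

end Iso

set_option maxHeartbeats 1000000 in
lemma ecCurledFamilyZ2_not_algIsoByCols :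
    ∀ i j : Fin 7, i ≠ j → ¬ AlgIsoByCols (ecCurledFamilyZ2 i) (ecCurledFamilyZ2 j) := by
  unfold AlgIsoByCols
  decide

set_option maxHeartbeats 4000000 in
set_option synthInstance.maxSize 2048 in
lemma existsUnique_algIsoByCols_ecCurledFamilyZ2 (a1 a2 a3 a4 b1 b2 b3 b4 : ZMod 2)
    (hnz : ¬ ∀ x y, scMul a1 a2 a3 a4 b1 b2 b3 b4 x y = 0)
    (hec : IsEndoCommutative (scMul a1 a2 a3 a4 b1 b2 b3 b4))
    (hcur : IsCurled (scMul a1 a2 a3 a4 b1 b2 b3 b4)) :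
    ∃! i : Fin 7, AlgIsoByCols (scMul a1 a2 a3 a4 b1 b2 b3 b4) (ecCurledFamilyZ2 i) := by
  revert a1 a2 a3 a4 b1 b2 b3 b4
  unfold IsEndoCommutative IsCurled AlgIsoByCols ExistsUnique
  beta_reduce
  decide

/-- over `F = ℤ/2ℤ`, any nonzero bilinear endo-commutative curled
multiplication on `F × F` is isomorphic to exactly one of the seven algebras of
`ecCurledFamilyZ2`, and those seven algebras are pairwise non-isomorphic. -/
theorem stmt_18 (m : ZMod 2 × ZMod 2 → ZMod 2 × ZMod 2 → ZMod 2 × ZMod 2)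
    (hbil : IsBilinearMul m) (hnz : ¬ ∀ x y, m x y = 0)
    (hec : ∀ x y, m (m x x) (m y y) = m (m x y) (m x y))
    (hcur : IsCurled m) :
    (∃! i : Fin 7, AlgIso m (ecCurledFamilyZ2 i)) ∧
      ∀ i j : Fin 7, i ≠ j → ¬ AlgIso (ecCurledFamilyZ2 i) (ecCurledFamilyZ2 j) := by
  simp only [algIso_iff_algIsoByCols]
  refine ⟨?_, ecCurledFamilyZ2_not_algIsoByCols⟩
  rw [hbil.eq_scMul] at hnz hec hcur ⊢
  exact existsUnique_algIsoByCols_ecCurledFamilyZ2 _ _ _ _ _ _ _ _ hnz hec hcur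
end
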